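/- Let Γ be a regular backward inhomogeneous Y-semigroup with generator A, let s ∈ J and G_s ∈ B(Y). Suppose G : J ∩ [s,∞) → B(Y) is a regular solution of the Cauchy problem, meaning: G is Y-strongly continuous (for every f ∈ Y, t ↦ G(t)f is continuous in the Y-norm), G(s) = G_s, and for every t ∈ J with t ≥ s and every f ∈ Y₁ the map t ↦ G(t)f is differentiable with d/dt G(t)f = G(t)A(t)f in Y. Then G(t)f = G_s Γ(s,t)f for all t ∈ J with t ≥ s and all f ∈ Y₁. -/

import Mathlib

/-!
Fix `t` and `f`, and put `φ(u) = G(u) Γ(u,t) f` for `u ∈ [s,t]`, so that `φ(s) = G_s Γ(s,t) f`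
and `φ(t) = G(t) f`. By the product rule `φ'(u) = -G(u) A(u) Γ(u,t) f + G(u) A(u) Γ(u,t) f = 0`,
so `φ` is constant. The product rule needs `G` only strongly continuous: by Banach–Steinhaus a
strongly continuous family of operators is bounded in norm on the compact interval `[s,t]`, and
a norm-bounded family `G(v) → G(u)` strongly also has `G(v) x_v → G(u) x` whenever `x_v → x`.
-/

open Filter Topology Set MeasureTheory

section

variable {𝕜 E F : Type*} [NontriviallyNormedField 𝕜] [NormedAddCommGroup E] [NormedSpace 𝕜 E]
  [NormedAddCommGroup F] [NormedSpace 𝕜 F]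

theorem IsCompact.exists_bound_opNorm_of_continuousOn_apply [CompleteSpace E]
    {X : Type*} [TopologicalSpace X] {K : Set X} (hK : IsCompact K) {G : X → E →L[𝕜] F}
    (hG : ∀ x, ContinuousOn (fun u => G u x) K) : ∃ M, ∀ u ∈ K, ‖G u‖ ≤ M := by
  have hpointwise : ∀ x, ∃ C, ∀ u : K, ‖G u x‖ ≤ C := fun x => by
    obtain ⟨C, hC⟩ := hK.exists_bound_of_continuousOn (hG x)
    exact ⟨C, fun u => hC u u.2⟩
  obtain ⟨M, hM⟩ := banach_steinhaus hpointwise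
  exact ⟨M, fun u hu => hM ⟨u, hu⟩⟩

theorem Filter.Tendsto.clm_apply_of_eventually_norm_le {α : Type*} {l : Filter α}
    {G : α → E →L[𝕜] F} {x : α → E} {x₀ : E} {y₀ : F} {M : ℝ}
    (hG : Tendsto (fun a => G a x₀) l (𝓝 y₀)) (hbd : ∀ᶠ a in l, ‖G a‖ ≤ M)
    (hx : Tendsto x l (𝓝 x₀)) : Tendsto (fun a => G a (x a)) l (𝓝 y₀) := by
  have hsmall : Tendsto (fun a => G a (x a - x₀)) l (𝓝 0) := by
    refine squeeze_zero_norm' (a := fun a => M * ‖x a - x₀‖) ?_ ?_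
    · filter_upwards [hbd] with a ha
      exact (G a).le_of_opNorm_le ha _
    · simpa using (tendsto_iff_norm_sub_tendsto_zero.mp hx).const_mul M
  simpa using hsmall.add hG

theorem HasDerivWithinAt.clm_apply_of_eventually_norm_le {G : 𝕜 → E →L[𝕜] F} {g : 𝕜 → E}
    {S : Set 𝕜} {u : 𝕜} {g' : E} {d : F} {M : ℝ}
    (hG : ContinuousWithinAt (fun v => G v g') S u) (hbd : ∀ᶠ v in 𝓝[S] u, ‖G v‖ ≤ M)
    (hg : HasDerivWithinAt g g' S u) (hGg : HasDerivWithinAt (fun v => G v (g u)) d S u) :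
    HasDerivWithinAt (fun v => G v (g v)) (G u g' + d) S u := by
  rw [hasDerivWithinAt_iff_tendsto_slope] at hg hGg ⊢
  have hslope : ∀ v, slope (fun v => G v (g v)) u v
      = G v (slope g u v) + slope (fun w => G w (g u)) u v := fun v => by
    simp only [slope_def_module, map_smul, map_sub, smul_sub]
    abel
  have hfilter : 𝓝[S \ {u}] u ≤ 𝓝[S] u := nhdsWithin_mono u sdiff_subset
  exact (((hG.mono_left hfilter).clm_apply_of_eventually_norm_le (hbd.filter_mono hfilter) hg).add
    hGg).congr fun v => (hslope v).symm

end

theorem stmt_3_general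
    {Y : Type*} [NormedAddCommGroup Y] [NormedSpace ℝ Y] [CompleteSpace Y]
    {Y₁ : Type*} [NormedAddCommGroup Y₁] [NormedSpace ℝ Y₁]
    (ι : Y₁ →L[ℝ] Y)
    (J : Set ℝ) (hJ : J = Set.Ici (0 : ℝ) ∨ ∃ T : ℝ, 0 < T ∧ J = Set.Icc 0 T)
    (Γ : ℝ → ℝ → Y →L[ℝ] Y)
    (hId : ∀ t ∈ J, Γ t t = ContinuousLinearMap.id ℝ Y)
    (A : ℝ → Y₁ → Y)
    (Γ₁ : ℝ → ℝ → Y₁ → Y₁)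
    (hΓ₁ : ∀ s t : ℝ, s ∈ J → t ∈ J → s ≤ t → ∀ f : Y₁, ι (Γ₁ s t f) = Γ s t (ι f))
    (hsDeriv : ∀ s t : ℝ, s ∈ J → t ∈ J → s ≤ t → ∀ f : Y₁,
      HasDerivWithinAt (fun u => Γ u t (ι f)) (-(A s (Γ₁ s t f))) {u ∈ J | u ≤ t} s)
    (s : ℝ) (hs : s ∈ J) (Gs : Y →L[ℝ] Y)
    (G : ℝ → Y →L[ℝ] Y)
    (hGcont : ∀ f : Y, ContinuousOn (fun t => G t f) {t ∈ J | s ≤ t})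
    (hGinit : G s = Gs)
    (hGderiv : ∀ t : ℝ, t ∈ J → s ≤ t → ∀ f : Y₁,
      HasDerivWithinAt (fun u => G u (ι f)) (G t (A t f)) {u ∈ J | s ≤ u} t) :
    ∀ t : ℝ, t ∈ J → s ≤ t → ∀ f : Y₁, G t (ι f) = Gs (Γ s t (ι f)) := by
  intro t ht hst f
  have hJ_ordConnected : J.OrdConnected := by
    rcases hJ with rfl | ⟨T, -, rfl⟩ <;> infer_instance
  have hIcc : Icc s t ⊆ J := hJ_ordConnected.out hs ht
  have hIcc_left : Icc s t ⊆ {u ∈ J | s ≤ u} := fun u hu => ⟨hIcc hu, hu.1⟩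
  obtain ⟨M, hM⟩ := isCompact_Icc.exists_bound_opNorm_of_continuousOn_apply
    fun y => (hGcont y).mono hIcc_left
  have hφ : ∀ u ∈ Icc s t, HasDerivWithinAt (fun v => G v (Γ v t (ι f))) 0 (Icc s t) u := by
    intro u hu
    have hΓ := (hsDeriv u t (hIcc hu) ht hu.2 f).mono fun v hv => ⟨hIcc hv, hv.2⟩
    have hG := (hGderiv u (hIcc hu) hu.1 (Γ₁ u t f)).mono hIcc_left
    rw [hΓ₁ u t (hIcc hu) ht hu.2 f] at hG
    simpa using hΓ.clm_apply_of_eventually_norm_le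
      ((hGcont _ u (hIcc_left hu)).mono hIcc_left) (eventually_nhdsWithin_of_forall hM) hG
  have hconst := constant_of_has_deriv_right_zero (fun u hu => (hφ u hu).continuousWithinAt)
    (fun u hu => (hφ u (Ico_subset_Icc_self hu)).mono_of_mem_nhdsWithin (Icc_mem_nhdsGE_of_mem hu))
    t ⟨hst, le_rfl⟩
  simpa [hId t ht, hGinit] using hconst

/-- Let `Γ` be a regular backward inhomogeneous `Y`-semigroup with generator
`A` (regularity: `Y₁ ⊆ D(A)` via `hGen`, `Γ` preserves `Y₁` via `Γ₁`/`hΓ₁`, the backward and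
forward derivative formulas `hsDeriv`/`htDeriv` hold, and `u ↦ Γ(s,u)A(u)f` is Bochner
integrable on `[s,t]`).  Let `s ∈ J` and `Gs ∈ B(Y)`.  If `G : J(s) → B(Y)` is a regular
solution of the Cauchy problem `d/dt G(t)f = G(t)A(t)f`, `G(s) = Gs`, i.e. `G` is `Y`-strongly
continuous and satisfies the Cauchy problem, then `G(t)f = Gs Γ(s,t)f` for all `t ∈ J`,
`t ≥ s`, and all `f ∈ Y₁`. -/
theorem stmt_3
    {Y : Type*} [NormedAddCommGroup Y] [NormedSpace ℝ Y] [CompleteSpace Y]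
    [TopologicalSpace.SeparableSpace Y]
    {Y₁ : Type*} [NormedAddCommGroup Y₁] [NormedSpace ℝ Y₁] [CompleteSpace Y₁]
    [TopologicalSpace.SeparableSpace Y₁]
    (ι : Y₁ →L[ℝ] Y) (hι : Function.Injective ι)
    (J : Set ℝ) (hJ : J = Set.Ici (0 : ℝ) ∨ ∃ T : ℝ, 0 < T ∧ J = Set.Icc 0 T)
    (Γ : ℝ → ℝ → Y →L[ℝ] Y)
    (hId : ∀ t ∈ J, Γ t t = ContinuousLinearMap.id ℝ Y)
    (hSemi : ∀ s r t : ℝ, s ∈ J → r ∈ J → t ∈ J → s ≤ r → r ≤ t →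
      ∀ f : Y, Γ s r (Γ r t f) = Γ s t f)
    (A : ℝ → Y₁ → Y)
    (hGen : ∀ t ∈ J, ∀ f : Y₁,
      Tendsto (fun h : ℝ => h⁻¹ • (Γ t (t + h) (ι f) - ι f))
        (𝓝[{h : ℝ | 0 < h ∧ t + h ∈ J}] 0) (𝓝 (A t f)) ∧
      Tendsto (fun h : ℝ => h⁻¹ • (Γ (t - h) t (ι f) - ι f))
        (𝓝[{h : ℝ | 0 < h ∧ t - h ∈ J}] 0) (𝓝 (A t f)))
    (Γ₁ : ℝ → ℝ → Y₁ → Y₁)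
    (hΓ₁ : ∀ s t : ℝ, s ∈ J → t ∈ J → s ≤ t → ∀ f : Y₁, ι (Γ₁ s t f) = Γ s t (ι f))
    (hsDeriv : ∀ s t : ℝ, s ∈ J → t ∈ J → s ≤ t → ∀ f : Y₁,
      HasDerivWithinAt (fun u => Γ u t (ι f)) (-(A s (Γ₁ s t f))) {u ∈ J | u ≤ t} s)
    (htDeriv : ∀ s t : ℝ, s ∈ J → t ∈ J → s ≤ t → ∀ f : Y₁,
      HasDerivWithinAt (fun u => Γ s u (ι f)) (Γ s t (A t f)) {u ∈ J | s ≤ u} t)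
    (hIntReg : ∀ s t : ℝ, s ∈ J → t ∈ J → s ≤ t → ∀ f : Y₁,
      IntegrableOn (fun u => Γ s u (A u f)) (Set.Icc s t))
    (s : ℝ) (hs : s ∈ J) (Gs : Y →L[ℝ] Y)
    (G : ℝ → Y →L[ℝ] Y)
    (hGcont : ∀ f : Y, ContinuousOn (fun t => G t f) {t ∈ J | s ≤ t})
    (hGinit : G s = Gs)
    (hGderiv : ∀ t : ℝ, t ∈ J → s ≤ t → ∀ f : Y₁,
      HasDerivWithinAt (fun u => G u (ι f)) (G t (A t f)) {u ∈ J | s ≤ u} t) :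
    ∀ t : ℝ, t ∈ J → s ≤ t → ∀ f : Y₁, G t (ι f) = Gs (Γ s t (ι f)) :=
  stmt_3_general ι J hJ Γ hId A Γ₁ hΓ₁ hsDeriv s hs Gs G hGcont hGinit hGderiv
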